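/- arXiv:2204.09307 — 5 statements merged into one kernel-verified Lean document; each statement's English description precedes it below -/
import Mathlib

section
/- Let h:[0,η₀)→(0,∞) be C¹ with h(0)=1, h'<0 on (0,η₀), such that H(η):=η^{N-1}(h^m)'(η)+(α/N)η^N h(η) satisfies H'(η)=(β+α/N)η^N h'(η) for all η∈(0,η₀), with α,β>0, m>1, N≥1. If η₀=∞, then h reaches zero in finite time; i.e., the assumption that h(η)>0 and h'(η)<0 for all η>0 leads to a contradiction. -/
/-!
The flux `H` is decreasing on `(0, ∞)` and tends to `0` at the origin, so `H ≤ 0`. For `η ≥ 1`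
this gives `(h^m)' ≤ -(α/N) η h ≤ -(α/N) h`, that is `(h^(m-1))' ≤ -(m-1)α/(mN)`, and the
positive function `h^(m-1)` would become negative in finite time.
-/

open Set Filter Topology Real

noncomputable def profileFlux (m α : ℝ) (N : ℕ) (h : ℝ → ℝ) (η : ℝ) : ℝ :=
  η ^ ((N : ℝ) - 1) * deriv (fun s => h s ^ m) η + α / N * η ^ (N : ℝ) * h η

lemma nonpos_of_antitoneOn_Ioi_of_le_tendsto_zero {H f : ℝ → ℝ} (hH : AntitoneOn H (Ioi 0))
    (hle : ∀ ε > 0, H ε ≤ f ε) (hf : Tendsto f (𝓝[>] 0) (𝓝 0)) {η : ℝ} (hη : 0 < η) :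
    H η ≤ 0 :=
  ge_of_tendsto hf <| by
    filter_upwards [Ioo_mem_nhdsGT hη] with ε hε
    exact (hH hε.1 hη hε.2.le).trans (hle ε hε.1)

lemma exists_nonpos_of_deriv_le_neg {g : ℝ → ℝ} {a c : ℝ} (hc : 0 < c)
    (hg : ∀ x ≥ a, DifferentiableAt ℝ g x) (hg' : ∀ x ≥ a, deriv g x ≤ -c) :
    ∃ x ≥ a, g x ≤ 0 := by
  set b := a + (|g a| + 1) / c
  have hcb : c * (b - a) = |g a| + 1 := by simp only [b]; field_simp; ring
  have hab : a < b := by simp only [b]; linarith [show 0 < (|g a| + 1) / c by positivity]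
  obtain ⟨ξ, hξ, hslope⟩ := exists_deriv_eq_slope g hab
    (fun x hx => (hg x hx.1).continuousAt.continuousWithinAt)
    (fun x hx => (hg x hx.1.le).differentiableWithinAt)
  have hgb : g b - g a ≤ -c * (b - a) := by
    have := hg' ξ hξ.1.le
    rwa [hslope, div_le_iff₀ (sub_pos.2 hab)] at this
  exact ⟨b, hab.le, by linarith [le_abs_self (g a)]⟩

lemma deriv_rpow_sub_one_le {f : ℝ → ℝ} {x m k : ℝ} (hm : 1 ≤ m) (hf : DifferentiableAt ℝ f x)
    (hx : 0 < f x) (hle : deriv (fun s => f s ^ m) x ≤ -k * f x) :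
    deriv (fun s => f s ^ (m - 1)) x ≤ -((m - 1) / m * k) := by
  have hm0 : 0 < m := by linarith
  have hsplit : f x ^ (m - 1) = f x ^ (m - 1 - 1) * f x := by
    rw [← rpow_add_one hx.ne']; ring_nf
  rw [(hf.hasDerivAt.rpow_const (p := m) (Or.inl hx.ne')).deriv, hsplit, ← mul_assoc] at hle
  rw [(hf.hasDerivAt.rpow_const (p := m - 1) (Or.inl hx.ne')).deriv]
  have hdiv : deriv f x * m * f x ^ (m - 1 - 1) ≤ -k :=
    le_of_mul_le_mul_right (by linarith) hx
  calc deriv f x * (m - 1) * f x ^ (m - 1 - 1)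
      = (m - 1) / m * (deriv f x * m * f x ^ (m - 1 - 1)) := by field_simp
    _ ≤ (m - 1) / m * -k := mul_le_mul_of_nonneg_left hdiv (by positivity)
    _ = _ := by ring

lemma profileFlux_le {m α : ℝ} {N : ℕ} {h : ℝ → ℝ} (hm : 0 ≤ m) {ε : ℝ} (hε : 0 < ε)
    (hpos : 0 < h ε) (hdec : deriv h ε < 0) :
    profileFlux m α N h ε ≤ α / N * ε ^ N * h ε := by
  have hdiff := differentiableAt_of_deriv_ne_zero hdec.ne
  have hderiv : deriv (fun s => h s ^ m) ε ≤ 0 := by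
    rw [(hdiff.hasDerivAt.rpow_const (p := m) (Or.inl hpos.ne')).deriv]
    exact mul_nonpos_of_nonpos_of_nonneg (mul_nonpos_of_nonpos_of_nonneg hdec.le hm) (by positivity)
  rw [profileFlux, rpow_natCast]
  linarith [mul_nonpos_of_nonneg_of_nonpos (by positivity : 0 ≤ ε ^ ((N : ℝ) - 1)) hderiv]

lemma profileFlux_nonpos {m α c : ℝ} {N : ℕ} {h : ℝ → ℝ} (hm : 0 ≤ m) (hc : 0 < c) (hN : N ≠ 0)
    (hcont : ContinuousWithinAt h (Ici 0) 0) (hpos : ∀ η > 0, 0 < h η)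
    (hdec : ∀ η > 0, deriv h η < 0)
    (hflux : ∀ η > 0, deriv (profileFlux m α N h) η = c * η ^ (N : ℝ) * deriv h η)
    {η : ℝ} (hη : 0 < η) :
    profileFlux m α N h η ≤ 0 := by
  have hderiv : ∀ η > 0, deriv (profileFlux m α N h) η < 0 := fun η hη => by
    rw [hflux η hη]
    exact mul_neg_of_pos_of_neg (by positivity) (hdec η hη)
  have hanti : AntitoneOn (profileFlux m α N h) (Ioi 0) :=
    (strictAntiOn_of_deriv_neg (convex_Ioi 0)
      (fun x hx => (differentiableAt_of_deriv_ne_zero (hderiv x hx).ne).continuousAt.continuousWithinAt)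
      (by simpa using hderiv)).antitoneOn
  refine nonpos_of_antitoneOn_Ioi_of_le_tendsto_zero hanti
    (fun ε hε => profileFlux_le hm hε (hpos ε hε) (hdec ε hε)) ?_ hη
  have hlim : Tendsto (fun ε : ℝ => α / N * ε ^ N * h ε) (𝓝[>] 0) (𝓝 (α / N * 0 ^ N * h 0)) :=
    ((continuous_const.mul (continuous_pow N)).continuousAt.continuousWithinAt.mono
      Ioi_subset_Ici_self).mul (hcont.mono Ioi_subset_Ici_self)
  simpa [zero_pow hN] using hlim

lemma deriv_rpow_le_of_profileFlux_nonpos {m α : ℝ} {N : ℕ} {h : ℝ → ℝ} (hα : 0 ≤ α) {η : ℝ}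
    (hη : 1 ≤ η) (hpos : 0 < h η) (hflux : profileFlux m α N h η ≤ 0) :
    deriv (fun s => h s ^ m) η ≤ -(α / N) * h η := by
  have hη0 : 0 < η := by linarith
  have hsplit : η ^ (N : ℝ) = η ^ ((N : ℝ) - 1) * η := by
    rw [← rpow_add_one hη0.ne']; ring_nf
  rw [profileFlux, hsplit] at hflux
  have hsum : deriv (fun s => h s ^ m) η + α / N * η * h η ≤ 0 :=
    nonpos_of_mul_nonpos_right (by linarith) (by positivity : 0 < η ^ ((N : ℝ) - 1))
  have hmono : α / N * h η ≤ α / N * η * h η := by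
    have : 0 ≤ α / N * h η := by positivity
    nlinarith
  linarith

theorem pme_profile_compact_support_general (m α β : ℝ) (N : ℕ)
    (hm : 1 < m) (hα : 0 < α) (hβ : 0 < β) (hN : 1 ≤ N)
    (h : ℝ → ℝ)
    (hreg : ContDiffOn ℝ 1 h (Set.Ici 0))
    (hpos : ∀ η > (0:ℝ), 0 < h η)
    (hdec : ∀ η > (0:ℝ), deriv h η < 0)
    (H : ℝ → ℝ)
    (hH : ∀ η, H η = η ^ ((N : ℝ) - 1) * deriv (fun s => h s ^ m) η + α / N * η ^ (N : ℝ) * h η)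
    (hH' : ∀ η > (0:ℝ), deriv H η = (β + α / N) * η ^ (N : ℝ) * deriv h η) :
    False := by
  obtain rfl : H = profileFlux m α N h := funext hH
  have hdiff : ∀ η > 0, DifferentiableAt ℝ h η := fun η hη =>
    differentiableAt_of_deriv_ne_zero (hdec η hη).ne
  have hflux : ∀ η > 0, profileFlux m α N h η ≤ 0 := fun η hη =>
    profileFlux_nonpos (by linarith) (by positivity) (by omega)
      (hreg.continuousOn.continuousWithinAt self_mem_Ici) hpos hdec hH' hη
  have hc : 0 < (m - 1) / m * (α / N) := by
    have : (0 : ℝ) < N := by exact_mod_cast hN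
    have : 0 < m - 1 := by linarith
    positivity
  obtain ⟨x, hx1, hx⟩ := exists_nonpos_of_deriv_le_neg (g := fun s => h s ^ (m - 1)) (a := 1) hc
    (fun x hx => (hdiff x (by linarith)).rpow_const (Or.inl (hpos x (by linarith)).ne'))
    (fun x hx => deriv_rpow_sub_one_le hm.le (hdiff x (by linarith)) (hpos x (by linarith))
      (deriv_rpow_le_of_profileFlux_nonpos hα.le hx (hpos x (by linarith)) (hflux x (by linarith))))
  exact (rpow_pos_of_pos (hpos x (by linarith)) _).not_ge hx

theorem pme_profile_compact_support (m α β : ℝ) (N : ℕ)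
    (hm : 1 < m) (hα : 0 < α) (hβ : 0 < β) (hN : 1 ≤ N)
    (h : ℝ → ℝ)
    (hreg : ContDiffOn ℝ 1 h (Set.Ici 0))
    (h0 : h 0 = 1)
    (hpos : ∀ η > (0:ℝ), 0 < h η)
    (hdec : ∀ η > (0:ℝ), deriv h η < 0)
    (H : ℝ → ℝ)
    (hH : ∀ η, H η = η ^ ((N : ℝ) - 1) * deriv (fun s => h s ^ m) η + α / N * η ^ (N : ℝ) * h η)
    (hH' : ∀ η > (0:ℝ), deriv H η = (β + α / N) * η ^ (N : ℝ) * deriv h η) :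
    False :=
  pme_profile_compact_support_general m α β N hm hα hβ hN h hreg hpos hdec H hH hH'
end

section
/- Let m>1, q∈(0,1), σ>0, N≥1, and let f∈C¹([0,ξ₀]) be nonnegative and decreasing with f>0 on [0,ξ₀), f(ξ₀)=0, (f^m)'(ξ₀)=0, satisfying m ξ^{N-1} f^{m-1-q}(ξ)|f'(ξ)| + β ξ^N f^{1-q}(ξ) ≤ ξ₀^{N+σ-1}(ξ₀−ξ) for all ξ∈(0,ξ₀) with β>0. Then there exist constants C₁,C₂>0 (depending only on m,N,q,σ,β,ξ₀) such that f(ξ) ≤ C₁(ξ₀−ξ)^{2/(m-q)} and f(ξ) ≤ C₂(ξ₀−ξ)^{1/(1-q)} for all ξ∈(ξ₀/2,ξ₀). -/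
/-!
On `(ξ₀/2, ξ₀)` the weights `ξ^(N-1)` and `ξ^N` are bounded below, so each of the two nonnegative
terms on the left of the integrated profile inequality is at most a constant times `ξ₀ - ξ`.
The absorption term gives `f^(1-q) ≤ C (ξ₀ - ξ)` directly. The diffusion term bounds
`|(f^(m-q))'| = (m-q) f^(m-q-1) |f'|` by `C (ξ₀ - ξ)`; since `f^(m-q)` vanishes at `ξ₀`, the mean
value theorem gives `f^(m-q)(ξ) ≤ C (ξ₀ - ξ)²`.
-/

open Set

theorem le_mul_rpow_div_of_rpow_le {x p C d k : ℝ} (hx : 0 ≤ x) (hp : 0 < p) (hC : 0 ≤ C)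
    (hd : 0 ≤ d) (h : x ^ p ≤ C * d ^ k) : x ≤ C ^ p⁻¹ * d ^ (k / p) :=
  calc x = (x ^ p) ^ p⁻¹ := (Real.rpow_rpow_inv hx hp.ne').symm
    _ ≤ (C * d ^ k) ^ p⁻¹ := by gcongr
    _ = C ^ p⁻¹ * d ^ (k / p) := by
      rw [Real.mul_rpow hC (by positivity), ← Real.rpow_mul hd, div_eq_mul_inv]

theorem le_div_mul_of_mul_rpow_mul_le {w a c e X K d : ℝ} (hw : 0 < w) (ha : 0 < a)
    (hac : a ≤ c) (he : 0 ≤ e) (hX : 0 ≤ X) (h : w * c ^ e * X ≤ K * d) :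
    X ≤ K / (w * a ^ e) * d := by
  rw [div_mul_eq_mul_div, le_div_iff₀ (by positivity)]
  calc X * (w * a ^ e) = w * a ^ e * X := by ring
    _ ≤ w * c ^ e * X := by gcongr
    _ ≤ K * d := h

theorem abs_sub_le_mul_sq_of_abs_deriv_le {g g' : ℝ → ℝ} {a b L : ℝ} (hab : a < b)
    (hg : ContinuousOn g (Icc a b)) (hg' : ∀ c ∈ Ioo a b, HasDerivAt g (g' c) c)
    (hbound : ∀ c ∈ Ioo a b, |g' c| ≤ L * (b - c)) : |g b - g a| ≤ L * (b - a) ^ 2 := by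
  obtain ⟨c, hc, hslope⟩ := exists_hasDerivAt_eq_slope g g' hab hg hg'
  have hba : 0 < b - a := sub_pos.mpr hab
  have hL : 0 ≤ L :=
    nonneg_of_mul_nonneg_left ((abs_nonneg _).trans (hbound c hc)) (sub_pos.mpr hc.2)
  calc |g b - g a| = |g' c| * (b - a) := by
        rw [hslope, abs_div, abs_of_pos hba, div_mul_cancel₀ _ hba.ne']
    _ ≤ L * (b - c) * (b - a) := by gcongr; exact hbound c hc
    _ ≤ L * (b - a) * (b - a) := by gcongr; exact hc.1.le
    _ = L * (b - a) ^ 2 := by ring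

section ProfileInequality

variable {m q β K a c d y y' : ℝ} {N : ℕ}

theorem diffusion_term_le (hm : 0 < m) (hβ : 0 ≤ β) (ha : 0 < a) (hac : a ≤ c) (hN : 1 ≤ N)
    (hy : 0 < y)
    (h : m * c ^ ((N : ℝ) - 1) * y ^ (m - 1 - q) * |y'| + β * c ^ (N : ℝ) * y ^ (1 - q) ≤ K * d) :
    y ^ (m - q - 1) * |y'| ≤ K / (m * a ^ ((N : ℝ) - 1)) * d := by
  have hc : 0 < c := ha.trans_le hac
  have habsorb : 0 ≤ β * c ^ (N : ℝ) * y ^ (1 - q) := by positivity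
  refine le_div_mul_of_mul_rpow_mul_le hm ha hac (sub_nonneg.mpr (by exact_mod_cast hN))
    (by positivity) ?_
  rw [sub_right_comm, ← mul_assoc]
  linarith

theorem absorption_term_le (hm : 0 ≤ m) (hβ : 0 < β) (ha : 0 < a) (hac : a ≤ c) (hy : 0 ≤ y)
    (h : m * c ^ ((N : ℝ) - 1) * y ^ (m - 1 - q) * |y'| + β * c ^ (N : ℝ) * y ^ (1 - q) ≤ K * d) :
    y ^ (1 - q) ≤ K / (β * a ^ (N : ℝ)) * d := by
  have hc : 0 < c := ha.trans_le hac
  have hdiffuse : 0 ≤ m * c ^ ((N : ℝ) - 1) * y ^ (m - 1 - q) * |y'| := by positivity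
  refine le_div_mul_of_mul_rpow_mul_le hβ ha hac (Nat.cast_nonneg N) (by positivity) ?_
  linarith

end ProfileInequality

theorem rpow_le_mul_sq_of_rpow_deriv_le {f : ℝ → ℝ} {p L a b : ℝ} (hp : 0 < p) (hab : a < b)
    (hf : ContinuousOn f (Icc a b)) (hfd : DifferentiableOn ℝ f (Ioo a b))
    (hpos : ∀ c ∈ Ioo a b, 0 < f c) (hb : f b = 0)
    (hbound : ∀ c ∈ Ioo a b, f c ^ (p - 1) * |deriv f c| ≤ L * (b - c)) :
    f a ^ p ≤ p * L * (b - a) ^ 2 := by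
  have hderiv : ∀ c ∈ Ioo a b,
      HasDerivAt (fun s => f s ^ p) (deriv f c * p * f c ^ (p - 1)) c := fun c hc =>
    ((hfd c hc).differentiableAt (Ioo_mem_nhds hc.1 hc.2)).hasDerivAt.rpow_const
      (Or.inl (hpos c hc).ne')
  have hmvt := abs_sub_le_mul_sq_of_abs_deriv_le hab (hf.rpow_const fun _ _ => Or.inr hp.le)
    hderiv fun c hc => by
      rw [abs_mul, abs_mul, abs_of_pos hp, abs_of_pos (Real.rpow_pos_of_pos (hpos c hc) _),
        mul_assoc p]
      calc |deriv f c| * p * f c ^ (p - 1) = p * (f c ^ (p - 1) * |deriv f c|) := by ring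
        _ ≤ p * (L * (b - c)) := mul_le_mul_of_nonneg_left (hbound c hc) hp.le
  rw [hb, Real.zero_rpow hp.ne', zero_sub, abs_neg] at hmvt
  exact (le_abs_self _).trans hmvt

theorem interface_upper_bounds_general (m q σ β ξ₀ : ℝ) (N : ℕ)
    (hm : 1 < m) (hq1 : q < 1) (hβ : 0 < β)
    (hN : 1 ≤ N) (hξ₀ : 0 < ξ₀)
    (f : ℝ → ℝ)
    (hreg : ContDiffOn ℝ 1 f (Set.Icc 0 ξ₀))
    (hpos : ∀ ξ ∈ Set.Ico 0 ξ₀, 0 < f ξ)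
    (hzero : f ξ₀ = 0)
    (hineq : ∀ ξ ∈ Set.Ioo 0 ξ₀,
      m * ξ ^ ((N : ℝ) - 1) * f ξ ^ (m - 1 - q) * |deriv f ξ| + β * ξ ^ (N : ℝ) * f ξ ^ (1 - q)
        ≤ ξ₀ ^ ((N : ℝ) + σ - 1) * (ξ₀ - ξ)) :
    ∃ C₁ > (0:ℝ), ∃ C₂ > (0:ℝ), ∀ ξ ∈ Set.Ioo (ξ₀ / 2) ξ₀,
      f ξ ≤ C₁ * (ξ₀ - ξ) ^ (2 / (m - q)) ∧ f ξ ≤ C₂ * (ξ₀ - ξ) ^ (1 / (1 - q)) := by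
  have hmq : 0 < m - q := by linarith
  have ha : 0 < ξ₀ / 2 := by linarith
  set K := ξ₀ ^ ((N : ℝ) + σ - 1)
  have hf : ∀ c ∈ Ioo (ξ₀ / 2) ξ₀, 0 < c ∧ 0 < f c := fun c hc =>
    ⟨ha.trans hc.1, hpos c ⟨(ha.trans hc.1).le, hc.2⟩⟩
  have hflux : ∀ c ∈ Ioo (ξ₀ / 2) ξ₀,
      f c ^ (m - q - 1) * |deriv f c| ≤ K / (m * (ξ₀ / 2) ^ ((N : ℝ) - 1)) * (ξ₀ - c) :=
    fun c hc => diffusion_term_le (by linarith) hβ.le ha hc.1.le hN (hf c hc).2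
      (hineq c ⟨(hf c hc).1, hc.2⟩)
  refine ⟨((m - q) * (K / (m * (ξ₀ / 2) ^ ((N : ℝ) - 1)))) ^ (m - q)⁻¹, by positivity,
    (K / (β * (ξ₀ / 2) ^ (N : ℝ))) ^ (1 - q)⁻¹, by positivity, fun ξ hξ => ⟨?_, ?_⟩⟩
  · have hsub : Icc ξ ξ₀ ⊆ Icc 0 ξ₀ := Icc_subset_Icc (hf ξ hξ).1.le le_rfl
    have hsq := rpow_le_mul_sq_of_rpow_deriv_le hmq hξ.2 (hreg.continuousOn.mono hsub)
      ((hreg.differentiableOn one_ne_zero).mono (Ioo_subset_Icc_self.trans hsub))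
      (fun c hc => (hf c ⟨hξ.1.trans hc.1, hc.2⟩).2) hzero
      (fun c hc => hflux c ⟨hξ.1.trans hc.1, hc.2⟩)
    rw [← Real.rpow_two] at hsq
    exact le_mul_rpow_div_of_rpow_le (hf ξ hξ).2.le hmq (by positivity) (by linarith [hξ.2]) hsq
  · refine le_mul_rpow_div_of_rpow_le (hf ξ hξ).2.le (by linarith) (by positivity)
      (by linarith [hξ.2]) ?_
    simpa only [Real.rpow_one] using absorption_term_le (by linarith) hβ ha hξ.1.le (hf ξ hξ).2.le
      (hineq ξ ⟨(hf ξ hξ).1, hξ.2⟩)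

theorem interface_upper_bounds (m q σ β ξ₀ : ℝ) (N : ℕ)
    (hm : 1 < m) (hq0 : 0 < q) (hq1 : q < 1) (hσ : 0 < σ) (hβ : 0 < β)
    (hN : 1 ≤ N) (hξ₀ : 0 < ξ₀)
    (f : ℝ → ℝ)
    (hreg : ContDiffOn ℝ 1 f (Set.Icc 0 ξ₀))
    (hnonneg : ∀ ξ ∈ Set.Icc 0 ξ₀, 0 ≤ f ξ)
    (hdec : StrictAntiOn f (Set.Icc 0 ξ₀))
    (hpos : ∀ ξ ∈ Set.Ico 0 ξ₀, 0 < f ξ)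
    (hzero : f ξ₀ = 0)
    (hderzero : deriv (fun s => f s ^ m) ξ₀ = 0)
    (hineq : ∀ ξ ∈ Set.Ioo 0 ξ₀,
      m * ξ ^ ((N : ℝ) - 1) * f ξ ^ (m - 1 - q) * |deriv f ξ| + β * ξ ^ (N : ℝ) * f ξ ^ (1 - q)
        ≤ ξ₀ ^ ((N : ℝ) + σ - 1) * (ξ₀ - ξ)) :
    ∃ C₁ > (0:ℝ), ∃ C₂ > (0:ℝ), ∀ ξ ∈ Set.Ioo (ξ₀ / 2) ξ₀,
      f ξ ≤ C₁ * (ξ₀ - ξ) ^ (2 / (m - q)) ∧ f ξ ≤ C₂ * (ξ₀ - ξ) ^ (1 / (1 - q)) :=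
  interface_upper_bounds_general m q σ β ξ₀ N hm hq1 hβ hN hξ₀ f hreg hpos hzero hineq
end

section
/- Let m>1, q∈(0,1) with m+q>2, and let f:(ξ₀/2,ξ₀)→(0,∞) be differentiable with f(ξ) ≤ C₂(ξ₀−ξ)^{1/(1-q)} for some C₂>0, with f extending continuously by 0 at ξ₀. Then limsup_{ξ→ξ₀} (f^{m-1})'(ξ) = 0. -/
theorem limsup_pressure_derivative_zero (m q ξ₀ C₂ : ℝ)
    (hm : 1 < m) (hq0 : 0 < q) (hq1 : q < 1) (hmq : 2 < m + q)
    (hξ₀ : 0 < ξ₀) (hC₂ : 0 < C₂)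
    (f : ℝ → ℝ)
    (hdiff : ∀ ξ ∈ Set.Ioo (ξ₀ / 2) ξ₀, DifferentiableAt ℝ f ξ)
    (hpos : ∀ ξ ∈ Set.Ioo (ξ₀ / 2) ξ₀, 0 < f ξ)
    (hbound : ∀ ξ ∈ Set.Ioo (ξ₀ / 2) ξ₀, f ξ ≤ C₂ * (ξ₀ - ξ) ^ (1 / (1 - q)))
    (hcont : Filter.Tendsto f (nhdsWithin ξ₀ (Set.Iio ξ₀)) (nhds 0))
    (hderneg : ∀ ξ ∈ Set.Ioo (ξ₀ / 2) ξ₀, deriv (fun s => f s ^ (m - 1)) ξ ≤ 0) :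
    Filter.limsup (fun ξ => deriv (fun s => f s ^ (m - 1)) ξ)
        (nhdsWithin ξ₀ (Set.Iio ξ₀)) = 0 := by
  set g : ℝ → ℝ := fun s => f s ^ (m - 1) with hg
  set l := nhdsWithin ξ₀ (Set.Iio ξ₀) with hl
  have hm1 : (0:ℝ) < m - 1 := by linarith
  have hq' : (0:ℝ) < 1 - q := by linarith
  -- Ioo (ξ₀/2) ξ₀ is eventually in the filter
  have hIoo : ∀ᶠ ξ in l, ξ ∈ Set.Ioo (ξ₀ / 2) ξ₀ := by
    have h1 : Set.Ioi (ξ₀ / 2) ∈ nhds ξ₀ := Ioi_mem_nhds (by linarith)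
    filter_upwards [nhdsWithin_le_nhds h1, self_mem_nhdsWithin] with ξ h1 h2
    exact ⟨h1, h2⟩
  have hev_le : ∀ᶠ ξ in l, deriv g ξ ≤ 0 := hIoo.mono fun ξ hξ => hderneg ξ hξ
  have hbdd : Filter.IsBoundedUnder (· ≤ ·) l (fun ξ => deriv g ξ) := ⟨0, hev_le⟩
  have hneBot : l.NeBot := by
    rw [hl]
    exact nhdsLT_neBot ξ₀
  have hle : Filter.limsup (fun ξ => deriv g ξ) l ≤ 0 := by
    rw [Filter.limsup_eq]
    by_cases hb : BddBelow {a : ℝ | ∀ᶠ ξ in l, deriv g ξ ≤ a}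
    · exact csInf_le hb hev_le
    · rw [Real.sInf_of_not_bddBelow hb]
  rcases eq_or_lt_of_le hle with h | h
  · exact h
  exfalso
  set L := Filter.limsup (fun ξ => deriv g ξ) l with hL
  set ε : ℝ := -(L / 2) with hε
  have hεpos : 0 < ε := by simp only [hε]; linarith
  -- eventually deriv g < L/2
  have hev : ∀ᶠ ξ in l, deriv g ξ < L / 2 :=
    Filter.eventually_lt_of_limsup_lt (by linarith) hbdd
  -- exponent
  set α : ℝ := 1 / (1 - q) * (m - 1) with hα
  have hα1 : 1 < α := by
    rw [hα]
    rw [div_mul_eq_mul_div, one_mul, lt_div_iff₀ hq']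
    linarith
  -- g tends to 0
  have hgto0 : Filter.Tendsto g l (nhds 0) := by
    have := hcont.rpow_const (p := m - 1) (Or.inr hm1.le)
    rwa [Real.zero_rpow (by linarith : m - 1 ≠ 0)] at this
  -- extract an interval where deriv g < L/2 and inside Ioo
  obtain ⟨a, ha, hsub⟩ := mem_nhdsLT_iff_exists_Ioo_subset.mp (hev.and hIoo)
  -- the quantity C₂^(m-1) * (ξ₀ - x)^(α - 1) tends to 0
  have htend : Filter.Tendsto (fun x => C₂ ^ (m - 1) * (ξ₀ - x) ^ (α - 1)) l (nhds 0) := by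
    have hsub0 : Filter.Tendsto (fun x => ξ₀ - x) l (nhds 0) := by
      have : Filter.Tendsto (fun x : ℝ => ξ₀ - x) (nhds ξ₀) (nhds (ξ₀ - ξ₀)) :=
        (tendsto_const_nhds.sub Filter.tendsto_id)
      simpa using this.mono_left nhdsWithin_le_nhds
    have := (hsub0.rpow_const (p := α - 1) (Or.inr (by linarith))).const_mul (C₂ ^ (m - 1))
    rwa [Real.zero_rpow (by linarith : α - 1 ≠ 0), mul_zero] at this
  have hsmall : ∀ᶠ x in l, C₂ ^ (m - 1) * (ξ₀ - x) ^ (α - 1) < ε :=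
    htend.eventually (eventually_lt_nhds hεpos)
  -- pick a point x
  have hax : ∀ᶠ x in l, x ∈ Set.Ioo a ξ₀ := by
    filter_upwards [nhdsWithin_le_nhds (Ioi_mem_nhds ha), self_mem_nhdsWithin] with x h1 h2
    exact ⟨h1, h2⟩
  obtain ⟨x, hx1, hx2⟩ := (hax.and hsmall).exists
  have hxmem : x ∈ Set.Ioo (ξ₀ / 2) ξ₀ := (hsub hx1).2
  -- MVT on [x, y] for y ∈ (x, ξ₀)
  have hmvt : ∀ y ∈ Set.Ioo x ξ₀, g y - g x ≤ L / 2 * (y - x) := by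
    intro y hy
    have hdg : ∀ z ∈ Set.Ioo (ξ₀ / 2) ξ₀, DifferentiableAt ℝ g z := fun z hz =>
      (hdiff z hz).rpow_const (Or.inl (hpos z hz).ne')
    have hIcc : Set.Icc x y ⊆ Set.Ioo (ξ₀ / 2) ξ₀ := fun z hz =>
      ⟨lt_of_lt_of_le hxmem.1 hz.1, lt_of_le_of_lt hz.2 hy.2⟩
    have hIoo' : Set.Ioo x y ⊆ Set.Ioo a ξ₀ := fun z hz =>
      ⟨lt_trans hx1.1 hz.1, lt_trans hz.2 hy.2⟩
    have := (convex_Icc x y).image_sub_le_mul_sub_of_deriv_le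
      (f := g) (C := L / 2)
      (fun z hz => ((hdg z (hIcc hz)).continuousAt).continuousWithinAt)
      (fun z hz => by
        rw [interior_Icc] at hz
        exact (hdg z (hIcc (Set.Ioo_subset_Icc_self hz))).differentiableWithinAt)
      (fun z hz => by
        rw [interior_Icc] at hz
        exact ((hsub (hIoo' hz)).1).le)
      x (Set.left_mem_Icc.mpr hy.1.le) y (Set.right_mem_Icc.mpr hy.1.le) hy.1.le
    exact this
  -- take the limit y → ξ₀⁻
  have hlim : -(g x) ≤ L / 2 * (ξ₀ - x) := by
    have h1 : Filter.Tendsto (fun y => g y - g x) l (nhds (0 - g x)) :=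
      hgto0.sub tendsto_const_nhds
    have h2 : Filter.Tendsto (fun y => L / 2 * (y - x)) l (nhds (L / 2 * (ξ₀ - x))) := by
      have : Filter.Tendsto (fun y : ℝ => L / 2 * (y - x)) (nhds ξ₀)
          (nhds (L / 2 * (ξ₀ - x))) := (Filter.tendsto_id.sub tendsto_const_nhds).const_mul _
      exact this.mono_left nhdsWithin_le_nhds
    have hevy : ∀ᶠ y in l, g y - g x ≤ L / 2 * (y - x) := by
      have hyIoo : ∀ᶠ y in l, y ∈ Set.Ioo x ξ₀ := by
        filter_upwards [nhdsWithin_le_nhds (Ioi_mem_nhds hxmem.2), self_mem_nhdsWithin]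
          with y h1 h2
        exact ⟨h1, h2⟩
      exact hyIoo.mono fun y hy => hmvt y hy
    have := le_of_tendsto_of_tendsto h1 h2 hevy
    simpa using this
  -- lower bound for g x
  have hgx_lb : ε * (ξ₀ - x) ≤ g x := by
    rw [hε]; nlinarith [hlim]
  -- upper bound for g x
  have hsx : (0:ℝ) < ξ₀ - x := by linarith [hxmem.2]
  have hgx_ub : g x ≤ C₂ ^ (m - 1) * (ξ₀ - x) ^ α := by
    have h1 : f x ^ (m - 1) ≤ (C₂ * (ξ₀ - x) ^ (1 / (1 - q))) ^ (m - 1) :=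
      Real.rpow_le_rpow (hpos x hxmem).le (hbound x hxmem) hm1.le
    calc g x ≤ (C₂ * (ξ₀ - x) ^ (1 / (1 - q))) ^ (m - 1) := h1
      _ = C₂ ^ (m - 1) * ((ξ₀ - x) ^ (1 / (1 - q))) ^ (m - 1) :=
        Real.mul_rpow hC₂.le (Real.rpow_nonneg hsx.le _)
      _ = C₂ ^ (m - 1) * (ξ₀ - x) ^ α := by
        rw [← Real.rpow_mul hsx.le, hα]
  -- combine
  have hfinal : ε ≤ C₂ ^ (m - 1) * (ξ₀ - x) ^ (α - 1) := by
    have h1 : ε * (ξ₀ - x) ≤ C₂ ^ (m - 1) * (ξ₀ - x) ^ (α - 1) * (ξ₀ - x) := by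
      have : (ξ₀ - x) ^ α = (ξ₀ - x) ^ (α - 1) * (ξ₀ - x) := by
        rw [show α = (α - 1) + 1 by ring, Real.rpow_add hsx, Real.rpow_one]
        ring_nf
      calc ε * (ξ₀ - x) ≤ g x := hgx_lb
        _ ≤ C₂ ^ (m - 1) * (ξ₀ - x) ^ α := hgx_ub
        _ = C₂ ^ (m - 1) * (ξ₀ - x) ^ (α - 1) * (ξ₀ - x) := by rw [this]; ring
    exact le_of_mul_le_mul_right h1 hsx
  linarith [hx2]
end

section
/- For the quadratic autonomous system Ẋ = X((m−q)Y/2 − (σ+2)X/2), Ẏ = −((m+q)/2)Y² − (N−1+σ/2)XY − XZ + (β/α)YZ + 1, Ż = Z((2−m−q)Y/2 + (2−σ)X/2): if (X,Y,Z)(η) is a solution on (0,∞) with X>0, Z>0, Y<0, X(η)→0 and Z(η)→Z⋆ as η→∞, and (η_j) is a nondecreasing sequence tending to ∞ with Ẏ(η_j)=0 for all j, then Y(η_j) → Y⋆ := (1/(m+q))·((β/α)Z⋆ − sqrt((β/α)²Z⋆² + 2(m+q))) as j→∞. -/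
/-! At a critical point `η_j` the equation for `Y` says that `Y(η_j)` is a root of a quadratic
`((m+q)/2) y² + b_j y + c_j` with `b_j = (N-1+σ/2) X - (β/α) Z` and `c_j = X Z - 1` evaluated at `η_j`.
Eventually `c_j < 0`, so the two roots have opposite signs and `Y(η_j) < 0` is the negative one.
The negative root is continuous in the coefficients, and `b_j → -(β/α) Z⋆`, `c_j → -1`. -/

open Filter Topology

noncomputable def negRoot (a b c : ℝ) : ℝ :=
  (-b - Real.sqrt (discrim a b c)) / (2 * a)

lemma eq_negRoot_of_quadratic_eq_zero {a b c y : ℝ} (ha : 0 < a) (hc : c < 0) (hy : y < 0)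
    (h : a * (y * y) + b * y + c = 0) : y = negRoot a b c := by
  set s := Real.sqrt (discrim a b c)
  have hs : discrim a b c = s * s :=
    (Real.mul_self_sqrt (by unfold discrim; nlinarith [sq_nonneg b])).symm
  have hbs : b < s := by
    have : |b| < s := (Real.lt_sqrt (abs_nonneg b)).2 (by unfold discrim; nlinarith [sq_abs b])
    linarith [le_abs_self b]
  rcases (quadratic_eq_zero_iff ha.ne' hs y).1 h with hplus | hminus
  · exact absurd hy (not_lt.2 (hplus ▸ div_nonneg (by linarith) (by linarith)))
  · exact hminus

lemma Filter.Tendsto.negRoot {α : Type*} {l : Filter α} {b c : α → ℝ} {b₀ c₀ : ℝ} (a : ℝ)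
    (hb : Tendsto b l (𝓝 b₀)) (hc : Tendsto c l (𝓝 c₀)) :
    Tendsto (fun x => negRoot a (b x) (c x)) l (𝓝 (negRoot a b₀ c₀)) :=
  (hb.neg.sub ((hb.pow 2).sub (hc.const_mul (4 * a))).sqrt).div_const (2 * a)

theorem critical_points_limit_general (m q σ α β Zstar : ℝ) (N : ℕ)
    (hm : 1 < m) (hq0 : 0 < q)
    (X Y Z : ℝ → ℝ)
    (hYeq : ∀ η > (0:ℝ), deriv Y η = -((m + q) / 2) * Y η ^ 2
      - ((N : ℝ) - 1 + σ / 2) * X η * Y η - X η * Z η + β / α * Y η * Z η + 1)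
    (hYneg : ∀ η > (0:ℝ), Y η < 0)
    (hXlim : Filter.Tendsto X Filter.atTop (nhds 0))
    (hZlim : Filter.Tendsto Z Filter.atTop (nhds Zstar))
    (ηs : ℕ → ℝ)
    (hηlim : Filter.Tendsto ηs Filter.atTop Filter.atTop)
    (hcrit : ∀ j, deriv Y (ηs j) = 0) :
    Filter.Tendsto (fun j => Y (ηs j)) Filter.atTop
      (nhds (1 / (m + q) * (β / α * Zstar
        - Real.sqrt ((β / α) ^ 2 * Zstar ^ 2 + 2 * (m + q))))) := by
  have ha : 0 < (m + q) / 2 := by linarith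
  set b : ℕ → ℝ := fun j => ((N : ℝ) - 1 + σ / 2) * X (ηs j) - β / α * Z (ηs j)
  set c : ℕ → ℝ := fun j => X (ηs j) * Z (ηs j) - 1
  have hXj := hXlim.comp hηlim
  have hZj := hZlim.comp hηlim
  have hb : Tendsto b atTop (𝓝 (-(β / α * Zstar))) := by
    simpa using (hXj.const_mul ((N : ℝ) - 1 + σ / 2)).sub (hZj.const_mul (β / α))
  have hc : Tendsto c atTop (𝓝 (-1)) := by simpa using (hXj.mul hZj).sub_const 1
  have hlim : negRoot ((m + q) / 2) (-(β / α * Zstar)) (-1) =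
      1 / (m + q) * (β / α * Zstar - Real.sqrt ((β / α) ^ 2 * Zstar ^ 2 + 2 * (m + q))) := by
    unfold negRoot discrim
    ring_nf
  rw [← hlim]
  refine (hb.negRoot ((m + q) / 2) hc).congr' ?_
  filter_upwards [hc.eventually (gt_mem_nhds (by norm_num : (-1 : ℝ) < 0)),
    hηlim.eventually_gt_atTop 0] with j hcj hηj
  refine (eq_negRoot_of_quadratic_eq_zero ha hcj (hYneg _ hηj) ?_).symm
  have hYj := hYeq _ hηj
  rw [hcrit j] at hYj
  linear_combination hYj

theorem critical_points_limit (m q σ α β Zstar : ℝ) (N : ℕ)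
    (hm : 1 < m) (hq0 : 0 < q) (hq1 : q < 1) (hσ : 0 < σ) (hα : 0 < α) (hβ : 0 < β)
    (hN : 1 ≤ N)
    (X Y Z : ℝ → ℝ)
    (hXdiff : ∀ η > (0:ℝ), DifferentiableAt ℝ X η)
    (hYdiff : ∀ η > (0:ℝ), DifferentiableAt ℝ Y η)
    (hZdiff : ∀ η > (0:ℝ), DifferentiableAt ℝ Z η)
    (hXeq : ∀ η > (0:ℝ), deriv X η = X η * ((m - q) / 2 * Y η - (σ + 2) / 2 * X η))
    (hYeq : ∀ η > (0:ℝ), deriv Y η = -((m + q) / 2) * Y η ^ 2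
      - ((N : ℝ) - 1 + σ / 2) * X η * Y η - X η * Z η + β / α * Y η * Z η + 1)
    (hZeq : ∀ η > (0:ℝ), deriv Z η = Z η * ((2 - m - q) / 2 * Y η + (2 - σ) / 2 * X η))
    (hXpos : ∀ η > (0:ℝ), 0 < X η)
    (hZpos : ∀ η > (0:ℝ), 0 < Z η)
    (hYneg : ∀ η > (0:ℝ), Y η < 0)
    (hXlim : Filter.Tendsto X Filter.atTop (nhds 0))
    (hZlim : Filter.Tendsto Z Filter.atTop (nhds Zstar))
    (ηs : ℕ → ℝ)
    (hmono : Monotone ηs)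
    (hηpos : ∀ j, 0 < ηs j)
    (hηlim : Filter.Tendsto ηs Filter.atTop Filter.atTop)
    (hcrit : ∀ j, deriv Y (ηs j) = 0) :
    Filter.Tendsto (fun j => Y (ηs j)) Filter.atTop
      (nhds (1 / (m + q) * (β / α * Zstar
        - Real.sqrt ((β / α) ^ 2 * Zstar ^ 2 + 2 * (m + q))))) :=
  critical_points_limit_general m q σ α β Zstar N hm hq0 X Y Z hYeq hYneg hXlim hZlim ηs hηlim hcrit
end

section
/- Let Y:(0,∞)→(−∞,0) be C¹ with limsup_{η→∞} Y(η) > −∞. Suppose Ẏ(η) = −((m+q)/2)Y(η)² + c·Y(η)·Z(η) + 1 + E(η), where E(η)→0 and Z(η)→Z⋆ as η→∞, m+q>0 and c∈ℝ. If along every unbounded nondecreasing sequence of critical points of Y one has Y→Y⋆ (the negative root of ((m+q)/2)y² − cZ⋆y − 1 = 0), and if Y is eventually monotone or has infinitely many critical points, then lim_{η→∞} Y(η) = Y⋆. -/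
open Filter Set

lemma aux_neg_root (m q c Zstar L : ℝ) (hmq : 0 < m + q) (hL : L < 0)
    (hroot : -((m + q) / 2) * L ^ 2 + c * L * Zstar + 1 = 0) :
    L = (c * Zstar - Real.sqrt (c ^ 2 * Zstar ^ 2 + 2 * (m + q))) / (m + q) := by
  have hΔ : (0:ℝ) ≤ c ^ 2 * Zstar ^ 2 + 2 * (m + q) := by positivity
  set s := Real.sqrt (c ^ 2 * Zstar ^ 2 + 2 * (m + q)) with hs
  have hs2 : s ^ 2 = c ^ 2 * Zstar ^ 2 + 2 * (m + q) := Real.sq_sqrt hΔ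
  have hs0 : 0 ≤ s := Real.sqrt_nonneg _
  have hkey : ((m + q) * L - c * Zstar) ^ 2 = s ^ 2 := by nlinarith [hroot]
  have habs : |(m + q) * L - c * Zstar| = |s| := by
    rw [← Real.sqrt_sq_eq_abs, ← Real.sqrt_sq_eq_abs, hkey]
  have hpos : 0 < s + c * Zstar := by nlinarith [hs2, hs0]
  rcases abs_eq_abs.mp habs with h | h
  · exfalso
    have : (m + q) * L < 0 := mul_neg_of_pos_of_neg hmq hL
    linarith
  · field_simp
    linarith

lemma aux_root_of_tendsto (m q c Zstar : ℝ)
    (Y E Z : ℝ → ℝ)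
    (hYC1 : ∀ η > (0:ℝ), DifferentiableAt ℝ Y η)
    (hYneg : ∀ η > (0:ℝ), Y η < 0)
    (hYeq : ∀ η > (0:ℝ),
      deriv Y η = -((m + q) / 2) * Y η ^ 2 + c * Y η * Z η + 1 + E η)
    (hElim : Filter.Tendsto E Filter.atTop (nhds 0))
    (hZlim : Filter.Tendsto Z Filter.atTop (nhds Zstar))
    (L : ℝ) (hL : Filter.Tendsto Y Filter.atTop (nhds L)) :
    -((m + q) / 2) * L ^ 2 + c * L * Zstar + 1 = 0 := by
  have hF : Tendsto (fun η => -((m + q) / 2) * Y η ^ 2 + c * Y η * Z η + 1 + E η)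
      atTop (nhds ((-((m + q) / 2) * L ^ 2 + c * L * Zstar + 1) + 0)) :=
    (((tendsto_const_nhds.mul (hL.pow 2)).add
      ((tendsto_const_nhds.mul hL).mul hZlim)).add tendsto_const_nhds).add hElim
  rw [add_zero] at hF
  set D := -((m + q) / 2) * L ^ 2 + c * L * Zstar + 1 with hDdef
  clear_value D
  have hD : Tendsto (deriv Y) atTop (nhds D) :=
    hF.congr' ((eventually_gt_atTop 0).mono fun η hη => (hYeq η hη).symm)
  by_contra hD0
  rcases lt_or_gt_of_ne hD0 with hDneg | hDpos
  · have h1 : ∀ᶠ η in atTop, deriv Y η < D / 2 :=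
      hD.eventually (eventually_lt_nhds (by linarith))
    have h2 : ∀ᶠ η in atTop, L - 1 < Y η := hL.eventually (eventually_gt_nhds (by linarith))
    obtain ⟨b, hb⟩ := eventually_atTop.1 ((h1.and h2).and (eventually_gt_atTop 0))
    have hb0 : (0:ℝ) < b := (hb b le_rfl).2
    have hcont : ContinuousOn Y (Ici b) := fun x hx =>
      ((hYC1 x (lt_of_lt_of_le hb0 hx)).continuousAt).continuousWithinAt
    have hdiff : DifferentiableOn ℝ Y (interior (Ici b)) := by
      rw [interior_Ici]
      exact fun x hx => (hYC1 x (lt_trans hb0 hx)).differentiableWithinAt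
    have hge : ∀ x ∈ interior (Ici b), deriv Y x ≤ D / 2 := by
      rw [interior_Ici]
      exact fun x hx => le_of_lt (hb x (le_of_lt hx)).1.1
    set y := b + (2 / D) * (L - 2 - Y b) with hy
    have hYb : L - 1 < Y b := (hb b le_rfl).1.2
    have h2D : 2 / D < 0 := div_neg_of_pos_of_neg two_pos hDneg
    have hyt : (0:ℝ) < (2 / D) * (L - 2 - Y b) :=
      mul_pos_of_neg_of_neg h2D (by linarith)
    have hyb : b ≤ y := by rw [hy]; linarith
    have key := (convex_Ici b).image_sub_le_mul_sub_of_deriv_le hcont hdiff hge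
      b self_mem_Ici y hyb hyb
    have hyc : D / 2 * (y - b) = L - 2 - Y b := by
      rw [hy]; field_simp; ring
    have hYy : L - 1 < Y y := (hb y hyb).1.2
    rw [hyc] at key
    linarith
  · have h1 : ∀ᶠ η in atTop, D / 2 < deriv Y η :=
      hD.eventually (eventually_gt_nhds (by linarith))
    obtain ⟨b, hb⟩ := eventually_atTop.1 (h1.and (eventually_gt_atTop 0))
    have hb0 : (0:ℝ) < b := (hb b le_rfl).2
    have hcont : ContinuousOn Y (Ici b) := fun x hx =>
      ((hYC1 x (lt_of_lt_of_le hb0 hx)).continuousAt).continuousWithinAt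
    have hdiff : DifferentiableOn ℝ Y (interior (Ici b)) := by
      rw [interior_Ici]
      exact fun x hx => (hYC1 x (lt_trans hb0 hx)).differentiableWithinAt
    have hge : ∀ x ∈ interior (Ici b), D / 2 ≤ deriv Y x := by
      rw [interior_Ici]
      exact fun x hx => le_of_lt (hb x (le_of_lt hx)).1
    have hYb : Y b < 0 := hYneg b hb0
    set y := b + (2 / D) * (1 - Y b) with hy
    have hyt : (0:ℝ) < (2 / D) * (1 - Y b) :=
      mul_pos (div_pos two_pos hDpos) (by linarith)
    have hyb : b ≤ y := by rw [hy]; linarith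
    have key := (convex_Ici b).mul_sub_le_image_sub_of_le_deriv hcont hdiff hge
      b self_mem_Ici y hyb hyb
    have hyc : D / 2 * (y - b) = 1 - Y b := by
      rw [hy]; field_simp; ring
    have hYy : Y y < 0 := hYneg y (lt_of_lt_of_le hb0 hyb)
    rw [hyc] at key
    linarith

theorem convergence_of_Y (m q c Zstar : ℝ) (hmq : 0 < m + q)
    (Y E Z : ℝ → ℝ)
    (hYC1 : ∀ η > (0:ℝ), DifferentiableAt ℝ Y η)
    (hYneg : ∀ η > (0:ℝ), Y η < 0)
    (hnotbot : ¬ Filter.Tendsto Y Filter.atTop Filter.atBot)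
    (hEcont : Continuous E) (hZcont : Continuous Z)
    (hYeq : ∀ η > (0:ℝ),
      deriv Y η = -((m + q) / 2) * Y η ^ 2 + c * Y η * Z η + 1 + E η)
    (hElim : Filter.Tendsto E Filter.atTop (nhds 0))
    (hZlim : Filter.Tendsto Z Filter.atTop (nhds Zstar))
    (Ystar : ℝ)
    (hYstar : Ystar = (c * Zstar - Real.sqrt (c ^ 2 * Zstar ^ 2 + 2 * (m + q))) / (m + q))
    (hcritlim : ∀ ηs : ℕ → ℝ, Monotone ηs → (∀ j, 0 < ηs j) →
      Filter.Tendsto ηs Filter.atTop Filter.atTop → (∀ j, deriv Y (ηs j) = 0) →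
      Filter.Tendsto (fun j => Y (ηs j)) Filter.atTop (nhds Ystar))
    (halt : (∃ a : ℝ, MonotoneOn Y (Set.Ici a) ∨ AntitoneOn Y (Set.Ici a)) ∨
      (∀ a : ℝ, ∃ η > a, deriv Y η = 0)) :
    Filter.Tendsto Y Filter.atTop (nhds Ystar) := by
  -- If Y converges to some L, then L = Ystar
  have key : ∀ L : ℝ, Tendsto Y atTop (nhds L) → Tendsto Y atTop (nhds Ystar) := by
    intro L hL
    have hroot := aux_root_of_tendsto m q c Zstar Y E Z hYC1 hYneg hYeq hElim hZlim L hL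
    have hL0 : L ≤ 0 := le_of_tendsto hL
      ((eventually_gt_atTop 0).mono fun η hη => le_of_lt (hYneg η hη))
    have hLneg : L < 0 := by
      rcases eq_or_lt_of_le hL0 with h | h
      · rw [h] at hroot; norm_num at hroot
      · exact h
    have hLeq := aux_neg_root m q c Zstar L hmq hLneg hroot
    rwa [hYstar, ← hLeq]
  rcases halt with ⟨a, hmono | hanti⟩ | hcrit
  · -- eventually monotone increasing
    set a' := max a 1 with ha'
    have hm' : MonotoneOn Y (Ici a') := hmono.mono (Ici_subset_Ici.2 (le_max_left a 1))
    set g : ℝ → ℝ := fun x => Y (max x a') with hg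
    have hgm : Monotone g := fun x y hxy =>
      hm' (mem_Ici.2 (le_max_right _ _)) (mem_Ici.2 (le_max_right _ _))
        (max_le_max hxy le_rfl)
    have hbdd : BddAbove (range g) := by
      refine ⟨0, ?_⟩
      rintro v ⟨x, rfl⟩
      exact le_of_lt (hYneg _ (lt_of_lt_of_le one_pos (le_trans (le_max_right a 1)
        (le_max_right x a'))))
    have hgt := tendsto_atTop_ciSup hgm hbdd
    have hYt : Tendsto Y atTop (nhds (⨆ x, g x)) :=
      hgt.congr' ((eventually_ge_atTop a').mono fun x hx => by
        simp only [hg]; rw [max_eq_left hx])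
    exact key _ hYt
  · -- eventually monotone decreasing
    set a' := max a 1 with ha'
    have hm' : AntitoneOn Y (Ici a') := hanti.mono (Ici_subset_Ici.2 (le_max_left a 1))
    set g : ℝ → ℝ := fun x => Y (max x a') with hg
    have hgm : Antitone g := fun x y hxy =>
      hm' (mem_Ici.2 (le_max_right _ _)) (mem_Ici.2 (le_max_right _ _))
        (max_le_max hxy le_rfl)
    have hbdd : BddBelow (range g) := by
      by_contra hnb
      apply hnotbot
      rw [tendsto_atBot]
      intro M
      obtain ⟨v, ⟨x, rfl⟩, hv⟩ := (not_bddBelow_iff.1 hnb) M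
      filter_upwards [eventually_ge_atTop (max x a')] with y hy
      have : Y y ≤ g x :=
        hm' (mem_Ici.2 (le_max_right _ _)) (mem_Ici.2 (le_trans (le_max_right x a') hy)) hy
      linarith
    have hgt := tendsto_atTop_ciInf hgm hbdd
    have hYt : Tendsto Y atTop (nhds (⨅ x, g x)) :=
      hgt.congr' ((eventually_ge_atTop a').mono fun x hx => by
        simp only [hg]; rw [max_eq_left hx])
    exact key _ hYt
  · -- infinitely many critical points
    have hB1 : ∀ ε > (0:ℝ), ∃ N : ℝ, ∀ p, N ≤ p → deriv Y p = 0 → 0 < p →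
        |Y p - Ystar| < ε := by
      by_contra hcon
      push_neg at hcon
      obtain ⟨ε, hε, hbad⟩ := hcon
      choose f hf1 hf2 hf3 hf4 using hbad
      set ηs : ℕ → ℝ := fun n => Nat.rec (motive := fun _ => ℝ) (f 1) (fun _ p => f (p + 1)) n
        with hηs
      have hstep : ∀ j, ηs (j + 1) = f (ηs j + 1) := fun j => rfl
      have hmono : Monotone ηs := monotone_nat_of_le_succ fun j => by
        rw [hstep]; linarith [hf1 (ηs j + 1)]
      have hpos : ∀ j, 0 < ηs j := fun j => by
        cases j with
        | zero => exact hf3 1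
        | succ j => rw [hstep]; exact hf3 _
      have hcr : ∀ j, deriv Y (ηs j) = 0 := fun j => by
        cases j with
        | zero => exact hf2 1
        | succ j => rw [hstep]; exact hf2 _
      have hgrow : ∀ j : ℕ, ηs 0 + (j : ℝ) ≤ ηs j := by
        intro j
        induction j with
        | zero => simp
        | succ j ih =>
          have h1 := hf1 (ηs j + 1)
          rw [hstep]
          push_cast
          linarith
      have htop : Tendsto ηs atTop atTop :=
        tendsto_atTop_mono hgrow
          (tendsto_atTop_add_const_left _ _ tendsto_natCast_atTop_atTop)
      have hcl := hcritlim ηs hmono hpos htop hcr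
      obtain ⟨J, hJ⟩ := Metric.tendsto_atTop.1 hcl ε hε
      have h1 := hJ J le_rfl
      rw [Real.dist_eq] at h1
      have h2 : ε ≤ |Y (ηs J) - Ystar| := by
        cases J with
        | zero => exact hf4 1
        | succ j => rw [hstep]; exact hf4 _
      linarith
    rw [Metric.tendsto_atTop]
    intro ε hε
    obtain ⟨N, hN⟩ := hB1 ε hε
    obtain ⟨p0, hp0gt, hp0crit⟩ := hcrit (max N 1)
    have hp01 : (1:ℝ) < p0 := lt_of_le_of_lt (le_max_right N 1) hp0gt
    have hp0pos : (0:ℝ) < p0 := lt_trans one_pos hp01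
    have hp0N : N ≤ p0 := le_of_lt (lt_of_le_of_lt (le_max_left N 1) hp0gt)
    refine ⟨p0, fun η hη => ?_⟩
    obtain ⟨qq, hqgt, hqcrit⟩ := hcrit η
    have hmem : η ∈ Icc p0 qq := ⟨hη, le_of_lt hqgt⟩
    have hcont : ContinuousOn Y (Icc p0 qq) := fun x hx =>
      ((hYC1 x (lt_of_lt_of_le hp0pos hx.1)).continuousAt).continuousWithinAt
    obtain ⟨ξ, hξmem, hξmax⟩ := isCompact_Icc.exists_isMaxOn ⟨η, hmem⟩ hcont
    obtain ⟨ζ, hζmem, hζmin⟩ := isCompact_Icc.exists_isMinOn ⟨η, hmem⟩ hcont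
    have hderiv : ∀ x, x ∈ Icc p0 qq →
        (IsMaxOn Y (Icc p0 qq) x ∨ IsMinOn Y (Icc p0 qq) x) → deriv Y x = 0 := by
      rintro x ⟨hx1, hx2⟩ hmm
      rcases eq_or_lt_of_le hx1 with h | h1
      · rw [← h]; exact hp0crit
      rcases eq_or_lt_of_le hx2 with h | h2
      · rw [h]; exact hqcrit
      have hnb : Icc p0 qq ∈ nhds x := Icc_mem_nhds h1 h2
      rcases hmm with hm | hm
      · exact (hm.isLocalMax hnb).deriv_eq_zero
      · exact (hm.isLocalMin hnb).deriv_eq_zero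
    have hbξ := hN ξ (le_trans hp0N hξmem.1) (hderiv ξ hξmem (Or.inl hξmax))
      (lt_of_lt_of_le hp0pos hξmem.1)
    have hbζ := hN ζ (le_trans hp0N hζmem.1) (hderiv ζ hζmem (Or.inr hζmin))
      (lt_of_lt_of_le hp0pos hζmem.1)
    have h1 : Y η ≤ Y ξ := hξmax hmem
    have h2 : Y ζ ≤ Y η := hζmin hmem
    rw [Real.dist_eq, abs_lt]
    exact ⟨by linarith [(abs_lt.1 hbζ).1], by linarith [(abs_lt.1 hbξ).2]⟩
end
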